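/- arXiv:2305.16354 — 4 statements merged into one kernel-verified Lean document; each statement's English description precedes it below -/
import Mathlib

section
/- Let M₁ and M₂ be matroids on the same finite ground set E, with rank functions r₁ and r₂. The following are equivalent: (a) M₁ ≥ M₂ (i.e., for every T ⊆ E, every base of M₁∘T contains a base of M₂∘T and every base of M₂∘T is contained in a base of M₁∘T); (b) M₂ is a quotient of M₁, i.e. r₁(T₂) − r₁(T₁) ≥ r₂(T₂) − r₂(T₁) for all T₁ ⊆ T₂ ⊆ E; (c) M₁* is a quotient of M₂*, i.e. r₂*(T₂) − r₂*(T₁) ≥ r₁*(T₂) − r₁*(T₁) for all T₁ ⊆ T₂ ⊆ E, where rᵢ* is the rank function of the dual matroid Mᵢ*. -/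
/-!
Taking `T₁ = ∅` in the quotient inequality gives `|I| = r₂(I) ≤ r₁(I)` for `M₂`-independent `I`,
so `I` is `M₁`-independent; taking `B ⊆ T` with `B` a base of `M₁ ↾ T` gives `r₂(T) ≤ r₂(B)`, so
an `M₂`-basis of `B` is an `M₂`-basis of `T`. Conversely, extend an `M₁`-basis `I` of `T₁` to an
`M₁`-basis `B` of `T₂` and choose an `M₂`-basis `B₂ ⊆ B` of `T₂`; then
`r₂(T₂) = |B₂ ∩ T₁| + |B₂ \ T₁| ≤ r₂(T₁) + |B \ I| = r₂(T₁) + r₁(T₂) - r₁(T₁)`.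
The dual rank formula `r*(T) = |T| + r(E \ T) - r(E)` turns the quotient inequality for
`T₁ ⊆ T₂` in the duals into the one for `E \ T₂ ⊆ E \ T₁` in the matroids themselves.
-/

open Matroid Set

variable {α : Type*}

/-- The contraction `M × T` of a matroid to the set `T` (i.e. the contraction of the
complement of `T`), defined via the standard identity `M × T = (M✶ ↾ T)✶`. -/
def Matroid.conTo (M : Matroid α) (T : Set α) : Matroid α := (M✶ ↾ T)✶

/-- The rank of a set `X` in a matroid `M`: the size of a maximal independent
subset of `X`. -/
noncomputable def Matroid.rnk (M : Matroid α) (X : Set α) : ℕ :=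
  sSup {n | ∃ I, M.Indep I ∧ I ⊆ X ∧ I.ncard = n}

/-- `M₁ ≥ M₂`: for every subset `T` of the ground set, every base of `M₁∘T` contains a
base of `M₂∘T`, and every base of `M₂∘T` is contained in a base of `M₁∘T`. -/
def Matroid.ge (M₁ M₂ : Matroid α) : Prop :=
  ∀ T ⊆ M₁.E,
    (∀ B, (M₁ ↾ T).IsBase B → ∃ B', (M₂ ↾ T).IsBase B' ∧ B' ⊆ B) ∧
    (∀ B', (M₂ ↾ T).IsBase B' → ∃ B, (M₁ ↾ T).IsBase B ∧ B' ⊆ B)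

namespace Matroid

def IsQuotient (N M : Matroid α) : Prop :=
  ∀ T₁ T₂ : Set α, T₁ ⊆ T₂ → T₂ ⊆ M.E → (N.rnk T₂ : ℤ) - N.rnk T₁ ≤ (M.rnk T₂ : ℤ) - M.rnk T₁

section Rank

variable {M : Matroid α} [M.RankFinite] {I X : Set α}

lemma IsBasis'.rnk_eq_ncard (hI : M.IsBasis' I X) : M.rnk X = I.ncard := by
  refine IsGreatest.csSup_eq ⟨⟨I, hI.indep, hI.subset, rfl⟩, ?_⟩
  rintro _ ⟨J, hJ, hJX, rfl⟩
  have hle : J.encard ≤ I.encard := hI.encard_eq_eRk ▸ hJ.encard_le_eRk_of_subset hJX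
  rwa [← hJ.finite.cast_ncard_eq, ← hI.indep.finite.cast_ncard_eq, Nat.cast_le] at hle

lemma cast_rnk_eq_eRk (M : Matroid α) [M.RankFinite] (X : Set α) : (M.rnk X : ℕ∞) = M.eRk X := by
  obtain ⟨I, hI⟩ := M.exists_isBasis' X
  rw [hI.rnk_eq_ncard, hI.indep.finite.cast_ncard_eq, hI.encard_eq_eRk]

lemma Indep.rnk_eq_ncard (hI : M.Indep I) : M.rnk I = I.ncard :=
  hI.isBasis_self.isBasis'.rnk_eq_ncard

@[simp]
lemma rnk_empty (M : Matroid α) [M.RankFinite] : M.rnk ∅ = 0 := by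
  simpa using M.empty_indep.rnk_eq_ncard

lemma Indep.ncard_le_rnk (hI : M.Indep I) (hIX : I ⊆ X) : I.ncard ≤ M.rnk X := by
  obtain ⟨J, hJ, hIJ⟩ := hI.subset_isBasis'_of_subset hIX
  exact hJ.rnk_eq_ncard ▸ ncard_le_ncard hIJ hJ.indep.finite

lemma indep_of_ncard_le_rnk (hI : I.Finite) (h : I.ncard ≤ M.rnk I) : M.Indep I := by
  obtain ⟨J, hJ⟩ := M.exists_isBasis' I
  obtain rfl : J = I := eq_of_subset_of_ncard_le hJ.subset (hJ.rnk_eq_ncard ▸ h) hI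
  exact hJ.indep

lemma Indep.isBasis'_of_rnk_le_ncard (hI : M.Indep I) (hIX : I ⊆ X) (h : M.rnk X ≤ I.ncard) :
    M.IsBasis' I X := by
  obtain ⟨J, hJ, hIJ⟩ := hI.subset_isBasis'_of_subset hIX
  obtain rfl : I = J :=
    eq_of_subset_of_ncard_le hIJ (hJ.rnk_eq_ncard ▸ h) hJ.indep.finite
  exact hJ

end Rank

lemma rnk_dual_add_rnk_ground (M : Matroid α) [M.Finite] {X : Set α} (hX : X ⊆ M.E) :
    M✶.rnk X + M.rnk M.E = M.rnk (M.E \ X) + X.ncard := by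
  have h := M.eRk_dual_add_eRank X hX
  rw [← eRk_ground, ← cast_rnk_eq_eRk, ← cast_rnk_eq_eRk, ← cast_rnk_eq_eRk,
    ← (M.set_finite X hX).cast_ncard_eq] at h
  exact_mod_cast h

section Quotient

variable {M₁ M₂ : Matroid α} [M₁.RankFinite] [M₂.RankFinite]

lemma IsQuotient.indep (hE : M₁.E = M₂.E) (hq : M₂.IsQuotient M₁) {I : Set α}
    (hI : M₂.Indep I) : M₁.Indep I := by
  have h := hq ∅ I (empty_subset I) (hE ▸ hI.subset_ground)
  rw [hI.rnk_eq_ncard, rnk_empty, rnk_empty] at h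
  exact indep_of_ncard_le_rnk hI.finite (by omega)

lemma IsQuotient.ge (hE : M₁.E = M₂.E) (hq : M₂.IsQuotient M₁) : M₁.ge M₂ := by
  intro T hT
  refine ⟨fun B hB ↦ ?_, fun B' hB' ↦ ?_⟩
  · rw [isBase_restrict_iff'] at hB
    obtain ⟨J, hJ⟩ := M₂.exists_isBasis' B
    have h := hq B T hB.subset hT
    rw [hB.indep.rnk_eq_ncard, hB.rnk_eq_ncard, hJ.rnk_eq_ncard] at h
    have hJT : M₂.IsBasis' J T :=
      hJ.indep.isBasis'_of_rnk_le_ncard (hJ.subset.trans hB.subset) (by omega)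
    exact ⟨J, isBase_restrict_iff'.2 hJT, hJ.subset⟩
  · rw [isBase_restrict_iff'] at hB'
    obtain ⟨B, hB, hB'B⟩ := (hq.indep hE hB'.indep).subset_isBasis'_of_subset hB'.subset
    exact ⟨B, isBase_restrict_iff'.2 hB, hB'B⟩

lemma ge.isQuotient (h : M₁.ge M₂) : M₂.IsQuotient M₁ := by
  intro T₁ T₂ h12 hT₂
  obtain ⟨I, hI⟩ := M₁.exists_isBasis' T₁
  obtain ⟨B, hB, hIB⟩ := hI.indep.subset_isBasis'_of_subset (hI.subset.trans h12)
  obtain ⟨B₂, hB₂, hB₂B⟩ := (h T₂ hT₂).1 B (isBase_restrict_iff'.2 hB)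
  rw [isBase_restrict_iff'] at hB₂
  have hBT₁ : B ∩ T₁ = I := hI.inter_eq_of_subset_indep hIB hB.indep
  have hB₂T₁ : (B₂ ∩ T₁).ncard ≤ M₂.rnk T₁ :=
    (hB₂.indep.inter_right T₁).ncard_le_rnk inter_subset_right
  have hB₂diff : (B₂ \ T₁).ncard ≤ (B \ T₁).ncard :=
    ncard_le_ncard (sdiff_subset_sdiff_left hB₂B) (hB.indep.finite.sdiff (t := T₁))
  have hB₂split := ncard_inter_add_ncard_sdiff_eq_ncard B₂ T₁ hB₂.indep.finite
  have hBsplit := ncard_inter_add_ncard_sdiff_eq_ncard B T₁ hB.indep.finite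
  rw [hBT₁] at hBsplit
  rw [hB₂.rnk_eq_ncard, hB.rnk_eq_ncard, hI.rnk_eq_ncard]
  omega

lemma ge_iff_isQuotient (hE : M₁.E = M₂.E) : M₁.ge M₂ ↔ M₂.IsQuotient M₁ :=
  ⟨ge.isQuotient, IsQuotient.ge hE⟩

end Quotient

section Dual

variable {M N : Matroid α} [M.Finite] [N.Finite]

lemma IsQuotient.dual (hE : M.E = N.E) (hq : N.IsQuotient M) : M✶.IsQuotient N✶ := by
  intro T₁ T₂ h12 hT₂
  have hT₂M : T₂ ⊆ M.E := hE ▸ hT₂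
  have hT₁M : T₁ ⊆ M.E := h12.trans hT₂M
  have h := hq (M.E \ T₂) (M.E \ T₁) (sdiff_subset_sdiff_right h12) sdiff_subset
  have hM₁ := M.rnk_dual_add_rnk_ground hT₁M
  have hM₂ := M.rnk_dual_add_rnk_ground hT₂M
  have hN₁ := N.rnk_dual_add_rnk_ground (hE ▸ hT₁M)
  have hN₂ := N.rnk_dual_add_rnk_ground (hE ▸ hT₂M)
  rw [← hE] at hN₁ hN₂
  omega

lemma isQuotient_iff_dual_isQuotient (hE : M.E = N.E) : N.IsQuotient M ↔ M✶.IsQuotient N✶ :=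
  ⟨IsQuotient.dual hE, fun h ↦ by simpa using IsQuotient.dual (M := N✶) (N := M✶) hE.symm h⟩

end Dual

end Matroid

/-- for finite matroids `M₁, M₂` on the same ground set, `M₁ ≥ M₂` holds
iff `M₂` is a quotient of `M₁`, iff `M₁✶` is a quotient of `M₂✶`. -/
theorem ge_iff_quotient_iff_dual_quotient (M₁ M₂ : Matroid α) [M₁.Finite] [M₂.Finite]
    (hE : M₁.E = M₂.E) :
    (M₁.ge M₂ ↔ ∀ T₁ T₂ : Set α, T₁ ⊆ T₂ → T₂ ⊆ M₁.E →
        (M₂.rnk T₂ : ℤ) - M₂.rnk T₁ ≤ (M₁.rnk T₂ : ℤ) - M₁.rnk T₁) ∧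
    (M₁.ge M₂ ↔ ∀ T₁ T₂ : Set α, T₁ ⊆ T₂ → T₂ ⊆ M₁.E →
        (M₁✶.rnk T₂ : ℤ) - M₁✶.rnk T₁ ≤ (M₂✶.rnk T₂ : ℤ) - M₂✶.rnk T₁) := by
  have hge : M₁.ge M₂ ↔ M₂.IsQuotient M₁ := ge_iff_isQuotient hE
  refine ⟨hge, hge.trans ((isQuotient_iff_dual_isQuotient hE).trans ?_)⟩
  rw [IsQuotient, dual_ground, hE]
end

section
/- Let M₁ and M₂ be matroids on the same finite ground set E with M₁ ≥ M₂. If r(M₁) = r(M₂), then M₁ = M₂. -/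
open Matroid Set

variable {α : Type*}

namespace Matroid

variable {M M₁ M₂ : Matroid α} {B B₁ B₂ : Set α}

lemma IsBase.rnk_ground_eq_ncard [M.RankFinite] (hB : M.IsBase B) :
    M.rnk M.E = B.ncard := by
  refine IsGreatest.csSup_eq ⟨⟨B, hB.indep, hB.subset_ground, rfl⟩, ?_⟩
  rintro n ⟨I, hI, -, rfl⟩
  obtain ⟨B', hB', hIB'⟩ := hI.exists_isBase_superset
  calc I.ncard ≤ B'.ncard := ncard_le_ncard hIB' hB'.finite
    _ = B.ncard := hB'.ncard_eq_ncard_of_isBase hB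

lemma IsBase.eq_of_subset_of_rnk_eq [M₁.RankFinite] (hB₁ : M₁.IsBase B₁) (hB₂ : M₂.IsBase B₂)
    (hsub : B₂ ⊆ B₁) (hr : M₁.rnk M₁.E = M₂.rnk M₂.E) : B₂ = B₁ := by
  have := hB₂.rankFinite_of_finite (hB₁.finite.subset hsub)
  refine eq_of_subset_of_ncard_le hsub ?_ hB₁.finite
  rw [← hB₁.rnk_ground_eq_ncard, ← hB₂.rnk_ground_eq_ncard, hr]

lemma ge.exists_isBase_subset (hge : M₁.ge M₂) (hE : M₁.E = M₂.E) (hB : M₁.IsBase B) :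
    ∃ B', M₂.IsBase B' ∧ B' ⊆ B := by
  have h := (hge M₁.E Subset.rfl).1 B
  rw [restrict_ground_eq_self, hE, restrict_ground_eq_self] at h
  exact h hB

lemma ge.exists_isBase_superset (hge : M₁.ge M₂) (hE : M₁.E = M₂.E) (hB : M₂.IsBase B) :
    ∃ B', M₁.IsBase B' ∧ B ⊆ B' := by
  have h := (hge M₁.E Subset.rfl).2 B
  rw [restrict_ground_eq_self, hE, restrict_ground_eq_self] at h
  exact h hB

end Matroid

theorem eq_of_ge_of_rank_eq_general (M₁ M₂ : Matroid α) [M₁.Finite]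
    (hE : M₁.E = M₂.E) (hge : M₁.ge M₂) (hr : M₁.rnk M₁.E = M₂.rnk M₂.E) :
    M₁ = M₂ := by
  refine ext_isBase hE fun B _ ↦ ⟨fun hB ↦ ?_, fun hB ↦ ?_⟩
  · obtain ⟨B₂, hB₂, hB₂B⟩ := hge.exists_isBase_subset hE hB
    rwa [← hB.eq_of_subset_of_rnk_eq hB₂ hB₂B hr]
  · obtain ⟨B₁, hB₁, hBB₁⟩ := hge.exists_isBase_superset hE hB
    rwa [hB₁.eq_of_subset_of_rnk_eq hB hBB₁ hr]

/-- if `M₁ ≥ M₂` and the matroids have equal rank, they are identical. -/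
theorem eq_of_ge_of_rank_eq (M₁ M₂ : Matroid α) [M₁.Finite] [M₂.Finite]
    (hE : M₁.E = M₂.E) (hge : M₁.ge M₂) (hr : M₁.rnk M₁.E = M₂.rnk M₂.E) :
    M₁ = M₂ :=
  eq_of_ge_of_rank_eq_general M₁ M₂ hE hge hr
end

section
/- Let S be a finite set and let f be an integral polymatroid rank function on S (f : 2^S → ℕ with f(∅) = 0, f monotone, f submodular). Then the convolution f∗|·|, given by (f∗|·|)(Y) := min_{X ⊆ Y} ( f(X) + |Y∖X| ), is the rank function of a matroid on S; that is, there exists a matroid M on ground set S whose rank function r_M satisfies r_M(Y) = min_{X ⊆ Y} ( f(X) + |Y∖X| ) for every Y ⊆ S. -/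
open Matroid Set

variable {α : Type*}

section Aux

variable {S : Type*} [Fintype S] [DecidableEq S] {f : Finset S → ℕ}

/-- The independence predicate induced by a polymatroid rank function. -/
def PInd (f : Finset S → ℕ) (I : Finset S) : Prop := ∀ X ⊆ I, X.card ≤ f X

lemma pind_subset {I J : Finset S} (hJ : PInd f J) (hIJ : I ⊆ J) : PInd f I :=
  fun X hX => hJ X (hX.trans hIJ)

/-- L1: any independent subset of `Y` has size at most `f X + |Y \ X|` for all `X ⊆ Y`. -/
lemma pind_card_le (hmono : ∀ ⦃X Y : Finset S⦄, X ⊆ Y → f X ≤ f Y)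
    {I Y X : Finset S} (hI : PInd f I) (hIY : I ⊆ Y) (hXY : X ⊆ Y) :
    I.card ≤ f X + (Y \ X).card := by
  have h1 : (I ∩ X).card ≤ f X :=
    le_trans (hI _ Finset.inter_subset_left) (hmono Finset.inter_subset_right)
  have h2 : (I \ X).card ≤ (Y \ X).card :=
    Finset.card_le_card (Finset.sdiff_subset_sdiff hIY (le_refl X))
  have := Finset.card_inter_add_card_sdiff I X
  omega

/-- If adding `e` to `A` does not increase `f`, the same holds for any superset of `A`. -/
lemma span_mono (hsub : ∀ X Y : Finset S, f (X ∪ Y) + f (X ∩ Y) ≤ f X + f Y)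
    (hmono : ∀ ⦃X Y : Finset S⦄, X ⊆ Y → f X ≤ f Y)
    {A B : Finset S} {e : S} (hAB : A ⊆ B) (h : f (insert e A) ≤ f A) :
    f (insert e B) ≤ f B := by
  have hs := hsub (insert e A) B
  have hu : insert e A ∪ B = insert e B := by
    rw [Finset.insert_union, Finset.union_eq_right.2 hAB]
  have hi : A ⊆ insert e A ∩ B := by
    intro x hx; exact Finset.mem_inter.2 ⟨Finset.mem_insert_of_mem hx, hAB hx⟩
  have := hmono hi
  rw [hu] at hs
  omega

/-- Union of tight subsets of an independent set is tight. -/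
lemma tight_union (hsub : ∀ X Y : Finset S, f (X ∪ Y) + f (X ∩ Y) ≤ f X + f Y)
    {I A B : Finset S} (hI : PInd f I) (hA : A ⊆ I) (hB : B ⊆ I)
    (htA : f A = A.card) (htB : f B = B.card) : f (A ∪ B) = (A ∪ B).card := by
  have h1 : (A ∪ B).card ≤ f (A ∪ B) := hI _ (Finset.union_subset hA hB)
  have h2 : (A ∩ B).card ≤ f (A ∩ B) := hI _ ((Finset.inter_subset_left).trans hA)
  have h3 := hsub A B
  have h4 := Finset.card_union_add_card_inter A B
  omega

/-- L2: if `I ⊆ Y` is a maximal independent subset of `Y`, then some `X ⊆ Y` certifies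
`f X + |Y \ X| ≤ |I|`. -/
lemma exists_certificate (hf0 : f ∅ = 0)
    (hmono : ∀ ⦃X Y : Finset S⦄, X ⊆ Y → f X ≤ f Y)
    (hsub : ∀ X Y : Finset S, f (X ∪ Y) + f (X ∩ Y) ≤ f X + f Y)
    {I Y : Finset S} (hI : PInd f I) (hIY : I ⊆ Y)
    (hmax : ∀ e ∈ Y, e ∉ I → ¬ PInd f (insert e I)) :
    ∃ X ⊆ Y, f X + (Y \ X).card ≤ I.card := by
  -- for each `e ∈ Y \ I` find a tight set `B e ⊆ I` spanning `e`
  have key : ∀ e ∈ Y \ I, ∃ B, B ⊆ I ∧ f B = B.card ∧ f (insert e B) ≤ f B := by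
    intro e he
    rw [Finset.mem_sdiff] at he
    obtain ⟨A, hAsub, hAcard⟩ : ∃ A ⊆ insert e I, ¬ A.card ≤ f A := by
      have := hmax e he.1 he.2
      unfold PInd at this; push_neg at this
      obtain ⟨A, hA1, hA2⟩ := this
      exact ⟨A, hA1, by omega⟩
    have heA : e ∈ A := by
      by_contra heA
      have : A ⊆ I := by
        intro x hx
        rcases Finset.mem_insert.1 (hAsub hx) with rfl | h
        · exact absurd hx heA
        · exact h
      exact hAcard (hI A this)
    refine ⟨A.erase e, ?_, ?_, ?_⟩
    · intro x hx
      have hxA := Finset.mem_of_mem_erase hx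
      rcases Finset.mem_insert.1 (hAsub hxA) with rfl | h
      · exact absurd rfl (Finset.ne_of_mem_erase hx)
      · exact h
    all_goals {
      have hins : insert e (A.erase e) = A := Finset.insert_erase heA
      have hcard : (A.erase e).card + 1 = A.card := Finset.card_erase_add_one heA
      have h1 : (A.erase e).card ≤ f (A.erase e) := by
        apply hI
        intro x hx
        have hxA := Finset.mem_of_mem_erase hx
        rcases Finset.mem_insert.1 (hAsub hxA) with rfl | h
        · exact absurd rfl (Finset.ne_of_mem_erase hx)
        · exact h
      have h2 : f (A.erase e) ≤ f A := hmono (Finset.erase_subset _ _)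
      have h3 : f (insert e (A.erase e)) = f A := by rw [hins]
      omega }
  choose B hBsub hBtight hBspan using key
  -- the union of the tight sets
  classical
  set C : Finset S := (Y \ I).attach.biUnion (fun e => B e.1 e.2) with hC
  have hCI : C ⊆ I := by
    intro x hx
    obtain ⟨e, _, hxe⟩ := Finset.mem_biUnion.1 hx
    exact hBsub e.1 e.2 hxe
  have hCtight : f C = C.card := by
    rw [hC]
    induction (Y \ I).attach using Finset.induction with
    | empty => simpa using hf0
    | @insert a s hx ih =>
      rw [Finset.biUnion_insert]
      exact tight_union hsub hI (hBsub a.1 a.2)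
        (fun x hx => by
          obtain ⟨e, _, hxe⟩ := Finset.mem_biUnion.1 hx
          exact hBsub e.1 e.2 hxe)
        (hBtight a.1 a.2) ih
  -- adding all of `Y \ I` to `C` does not increase `f`
  have hspan : ∀ D ⊆ Y \ I, f (C ∪ D) ≤ f C := by
    intro D hD
    induction D using Finset.induction with
    | empty => simp
    | @insert e D' hx ih =>
      have he : e ∈ Y \ I := hD (Finset.mem_insert_self _ _)
      have hD' : D' ⊆ Y \ I := (Finset.subset_insert _ _).trans hD
      have hBC : B e he ⊆ C ∪ D' := by
        intro x hx
        exact Finset.mem_union_left _ (Finset.mem_biUnion.2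
          ⟨⟨e, he⟩, Finset.mem_attach _ _, hx⟩)
      have hstep : f (insert e (C ∪ D')) ≤ f (C ∪ D') := by
        refine span_mono hsub hmono hBC ?_
        have h1 : f (insert e (B e he)) ≤ f (B e he) := hBspan e he
        exact h1
      have hrw : C ∪ insert e D' = insert e (C ∪ D') := Finset.union_insert _ _ _
      rw [hrw]
      exact le_trans hstep (ih hD')
  refine ⟨C ∪ (Y \ I), Finset.union_subset (hCI.trans hIY) (Finset.sdiff_subset), ?_⟩
  have h1 : f (C ∪ (Y \ I)) ≤ C.card := by
    rw [← hCtight]; exact hspan _ (le_refl _)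
  have h2 : Y \ (C ∪ (Y \ I)) = I \ C := by
    ext x
    simp only [Finset.mem_sdiff, Finset.mem_union, not_or, Finset.mem_sdiff, not_and, not_not]
    constructor
    · rintro ⟨hxY, hxC, h⟩; exact ⟨h hxY, hxC⟩
    · rintro ⟨hxI, hxC⟩; exact ⟨hIY hxI, hxC, fun _ => hxI⟩
  rw [h2]
  have h3 : (I \ C).card + C.card = I.card := Finset.card_sdiff_add_card_eq_card hCI
  omega

end Aux

/-- the convolution `f∗|·|` of an integral polymatroid rank function `f` with
the cardinality function is the rank function of a matroid. -/
theorem convolution_is_matroid_rank {S : Type*} [Fintype S] [DecidableEq S]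
    (f : Finset S → ℕ) (hf0 : f ∅ = 0)
    (hmono : ∀ ⦃X Y : Finset S⦄, X ⊆ Y → f X ≤ f Y)
    (hsub : ∀ X Y : Finset S, f (X ∪ Y) + f (X ∩ Y) ≤ f X + f Y) :
    ∃ M : Matroid S, M.E = Set.univ ∧
      ∀ Y : Finset S, M.rnk ↑Y =
        Y.powerset.inf' (Finset.powerset_nonempty Y) (fun X => f X + (Y \ X).card) := by
  classical
  have indep_empty : PInd f (∅ : Finset S) := by
    intro X hX
    rw [Finset.subset_empty.1 hX]
    simp [hf0]
  have indep_aug : ∀ ⦃I J : Finset S⦄, PInd f I → PInd f J → I.card < J.card →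
      ∃ e ∈ J, e ∉ I ∧ PInd f (insert e I) := by
    intro I J hI hJ hcard
    by_contra hcon
    push_neg at hcon
    obtain ⟨X, hXsub, hXle⟩ :=
      exists_certificate hf0 hmono hsub hI (Finset.subset_union_left (s₂ := J))
        (by
          intro e he heI
          rcases Finset.mem_union.1 he with h | h
          · exact absurd h heI
          · exact hcon e h heI)
    have := pind_card_le hmono hJ (Finset.subset_union_right (s₁ := I)) hXsub
    omega
  set M : Matroid S := (IndepMatroid.ofFinset Set.univ (PInd f) indep_empty
    (fun I J hJ hIJ => pind_subset hJ hIJ) indep_aug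
    (fun I _ => Set.subset_univ _)).matroid with hM
  have hME : M.E = Set.univ := rfl
  have hMindep : ∀ I : Finset S, M.Indep ↑I ↔ PInd f I := by
    intro I
    rw [hM, IndepMatroid.matroid_indep_iff, IndepMatroid.ofFinset_indep]
  refine ⟨M, hME, fun Y => ?_⟩
  -- choose a maximum-size independent subset of Y
  have hne : ({I ∈ Y.powerset | PInd f I} : Finset (Finset S)).Nonempty :=
    ⟨∅, by simp [indep_empty]⟩
  obtain ⟨I, hImem, hImax⟩ := Finset.exists_max_image _ Finset.card hne
  rw [Finset.mem_filter, Finset.mem_powerset] at hImem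
  obtain ⟨hIY, hIind⟩ := hImem
  have hmaxI : ∀ e ∈ Y, e ∉ I → ¬ PInd f (insert e I) := by
    intro e heY heI hcon
    have hmem : insert e I ∈ {I ∈ Y.powerset | PInd f I} := by
      rw [Finset.mem_filter, Finset.mem_powerset]
      exact ⟨Finset.insert_subset heY hIY, hcon⟩
    have := hImax _ hmem
    rw [Finset.card_insert_of_notMem heI] at this
    omega
  obtain ⟨X₀, hX₀sub, hX₀le⟩ := exists_certificate hf0 hmono hsub hIind hIY hmaxI
  -- the min equals I.card
  have hmin : Y.powerset.inf' (Finset.powerset_nonempty Y)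
      (fun X => f X + (Y \ X).card) = I.card := by
    apply le_antisymm
    · exact le_trans (Finset.inf'_le _ (Finset.mem_powerset.2 hX₀sub)) hX₀le
    · apply Finset.le_inf'
      intro X hX
      exact pind_card_le hmono hIind hIY (Finset.mem_powerset.1 hX)
  rw [hmin]
  -- now compute the rank
  have hub : ∀ n ∈ {n | ∃ J, M.Indep J ∧ J ⊆ (↑Y : Set S) ∧ J.ncard = n}, n ≤ I.card := by
    rintro n ⟨J, hJind, hJY, rfl⟩
    have hJfin : J.Finite := Set.toFinite J
    have hJf : M.Indep ↑hJfin.toFinset := by rwa [Set.Finite.coe_toFinset]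
    have hJind' : PInd f hJfin.toFinset := (hMindep _).1 hJf
    have hJY' : hJfin.toFinset ⊆ Y := by
      intro x hx
      have : x ∈ J := (Set.Finite.mem_toFinset hJfin).1 hx
      exact_mod_cast hJY this
    have := pind_card_le hmono hJind' hJY' hX₀sub
    rw [Set.ncard_eq_toFinset_card J hJfin]
    omega
  have hmem : I.card ∈ {n | ∃ J, M.Indep J ∧ J ⊆ (↑Y : Set S) ∧ J.ncard = I.card} := by
    exact ⟨↑I, (hMindep I).2 hIind, by exact_mod_cast hIY, Set.ncard_coe_finset I⟩
  unfold Matroid.rnk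
  apply le_antisymm
  · exact csSup_le ⟨_, hmem⟩ hub
  · exact le_csSup ⟨I.card, hub⟩ hmem
end

section
/- Let M be a matroid on ground set S⊎Q with S, Q disjoint finite sets. Then M is {S,Q}-complete if and only if its dual M* is {S,Q}-complete. -/
open Matroid Set

variable {α : Type*}

/-- A matroid `M` on the ground set `S ⊎ Q` is `{S,Q}`-complete if whenever
`b_S ∪ b_Q`, `b_S ∪ b'_Q` and `b'_S ∪ b_Q` are bases of `M` (with `b_S, b'_S ⊆ S` and
`b_Q, b'_Q ⊆ Q`), so is `b'_S ∪ b'_Q`. -/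
def Matroid.SQComplete (M : Matroid α) (S Q : Set α) : Prop :=
  ∀ bS bS' bQ bQ' : Set α, bS ⊆ S → bS' ⊆ S → bQ ⊆ Q → bQ' ⊆ Q →
    M.IsBase (bS ∪ bQ) → M.IsBase (bS ∪ bQ') → M.IsBase (bS' ∪ bQ) → M.IsBase (bS' ∪ bQ')

/-
Complementation in `S ∪ Q` acts separately on the `S`- and `Q`-parts of a set, so it
carries the bases of `M✶` of the shape `b_S ∪ b_Q` to the bases `(S \ b_S) ∪ (Q \ b_Q)` of `M`,
and the four-base condition is preserved under this correspondence.
-/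

theorem Set.union_diff_union_of_subset_of_disjoint {S Q a b : Set α} (ha : a ⊆ S) (hb : b ⊆ Q)
    (h : Disjoint S Q) : (S ∪ Q) \ (a ∪ b) = (S \ a) ∪ (Q \ b) := by
  have hS : S \ (a ∪ b) = S \ a := by
    rw [← sdiff_sdiff, (h.mono_left sdiff_subset |>.mono_right hb).sdiff_eq_left]
  have hQ : Q \ (a ∪ b) = Q \ b := by
    rw [union_comm, ← sdiff_sdiff, (h.symm.mono_left sdiff_subset |>.mono_right ha).sdiff_eq_left]
  rw [union_sdiff_distrib, hS, hQ]

namespace Matroid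

variable {M : Matroid α} {S Q : Set α}

theorem dual_isBase_union_iff (hdisj : Disjoint S Q) (hE : M.E = S ∪ Q) {a b : Set α}
    (ha : a ⊆ S) (hb : b ⊆ Q) : M✶.IsBase (a ∪ b) ↔ M.IsBase ((S \ a) ∪ (Q \ b)) := by
  rw [dual_isBase_iff (hE ▸ union_subset_union ha hb), hE,
    union_diff_union_of_subset_of_disjoint ha hb hdisj]

theorem SQComplete.dual (hdisj : Disjoint S Q) (hE : M.E = S ∪ Q) (h : M.SQComplete S Q) :
    M✶.SQComplete S Q := by
  intro bS bS' bQ bQ' hbS hbS' hbQ hbQ'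
  simp only [dual_isBase_union_iff hdisj hE, *]
  exact h _ _ _ _ sdiff_subset sdiff_subset sdiff_subset sdiff_subset

end Matroid

theorem sqComplete_iff_dual_sqComplete_general (M : Matroid α) (S Q : Set α)
    (hdisj : Disjoint S Q) (hE : M.E = S ∪ Q) :
    M.SQComplete S Q ↔ M✶.SQComplete S Q :=
  ⟨SQComplete.dual hdisj hE, fun h => M.dual_dual ▸ h.dual hdisj (by rwa [dual_ground])⟩

/-- `M` is `{S,Q}`-complete iff its dual `M✶` is `{S,Q}`-complete. -/
theorem sqComplete_iff_dual_sqComplete (M : Matroid α) [M.Finite] (S Q : Set α)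
    (hdisj : Disjoint S Q) (hE : M.E = S ∪ Q) :
    M.SQComplete S Q ↔ M✶.SQComplete S Q :=
  sqComplete_iff_dual_sqComplete_general M S Q hdisj hE
end
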